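/- Let T be the 10×10 real symmetric matrix whose rows and columns are indexed by the 2-element subsets of {1,2,3,4,5}, with entries T(s,s) = -4, T(s,t) = 7/2 if s and t share exactly one element, and T(s,t) = -9 if s and t are disjoint. Then, as ε → 0⁺, the regularized integral ∫_{ℝ^10} exp(-ε‖x‖²)·cos(xᵀTx) dx converges to 0. -/

import Mathlib

open MeasureTheory Filter

/-- The 10×10 real symmetric matrix indexed by 2-element subsets of {1,…,5},
with `-4` on the diagonal, `7/2` when the two subsets share exactly one element,
and `-9` when they are disjoint. -/
noncomputable def HessianMatrix :
    Matrix {s : Finset (Fin 5) // s.card = 2} {s : Finset (Fin 5) // s.card = 2} ℝ :=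
  fun s t =>
    if (s.1 ∩ t.1).card = 2 then -4
    else if (s.1 ∩ t.1).card = 1 then 7/2
    else -9

/-!
Choose `P` whose columns are orthogonal eigenvectors of `T`, so that `Pᵀ P = diag c` and
`Pᵀ T P = diag d`. Substituting `x = P y` factors the regularized integral into complex Gaussians:
it equals `|det P| · Re ∏ (π / (ε c_s - i d_s))^{1/2}`. As `ε → 0⁺` the factor `s` tends to
`√(π / |d_s|) · e^{i π sign(d_s) / 4}`, so the limit is `|det P| ∏ √(π / |d_s|) · cos (π σ / 4)`
with `σ = ∑ sign d_s` the signature of `T`. The eigenvalues of `T` are `-10`, `35/2` (four times)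
and `-20` (five times), hence `σ = -2` and the cosine vanishes.
-/

open Matrix Topology
open scoped Real
open Complex (I)

section Gaussian

variable {ι : Type*} [Fintype ι]

lemma sum_sum_mul_mul_eq_dotProduct_mulVec (A : Matrix ι ι ℝ) (x : ι → ℝ) :
    ∑ s, ∑ t, A s t * x s * x t = x ⬝ᵥ A *ᵥ x := by
  simp only [dotProduct, mulVec, Finset.mul_sum]
  exact Finset.sum_congr rfl fun s _ => Finset.sum_congr rfl fun t _ => by ring

lemma mulVec_dotProduct_mulVec_mulVec (A P : Matrix ι ι ℝ) (y : ι → ℝ) :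
    P *ᵥ y ⬝ᵥ A *ᵥ (P *ᵥ y) = y ⬝ᵥ (Pᵀ * A * P) *ᵥ y := by
  rw [← mulVec_mulVec, ← mulVec_mulVec, dotProduct_mulVec y, vecMul_transpose]

lemma dotProduct_diagonal_mulVec [DecidableEq ι] (d y : ι → ℝ) :
    y ⬝ᵥ diagonal d *ᵥ y = ∑ s, d s * y s ^ 2 := by
  simp only [dotProduct, mulVec_diagonal]
  exact Finset.sum_congr rfl fun s _ => by ring

theorem integral_comp_mulVec [DecidableEq ι] {P : Matrix ι ι ℝ} (hP : P.det ≠ 0)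
    (f : (ι → ℝ) → ℝ) : ∫ x, f x = |P.det| * ∫ y, f (P *ᵥ y) := by
  let e : (ι → ℝ) ≃L[ℝ] (ι → ℝ) :=
    ((toLin' P).equivOfDetNeZero (by rwa [LinearMap.det_toLin'])).toContinuousLinearEquiv
  have hmap : Measure.map e volume = ENNReal.ofReal |P.det|⁻¹ • volume := by
    rw [← abs_inv]
    exact Real.map_matrix_volume_pi_eq_smul_volume_pi hP
  have hchange : ∫ y, f (P *ᵥ y) = ∫ x, f x ∂Measure.map e volume :=
    (e.toHomeomorph.measurableEmbedding.integral_map f).symm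
  rw [hchange, hmap, integral_smul_measure, ENNReal.toReal_ofReal (by positivity), smul_eq_mul,
    mul_inv_cancel_left₀ (abs_ne_zero.mpr hP)]

lemma det_ne_zero_of_transpose_mul_self_eq_diagonal [DecidableEq ι] {P : Matrix ι ι ℝ}
    {c : ι → ℝ} (hc : ∀ s, 0 < c s) (hPc : Pᵀ * P = diagonal c) : P.det ≠ 0 := by
  have h : P.det * P.det = ∏ s, c s := by
    rw [← det_diagonal, ← hPc, det_mul, det_transpose]
  intro h0
  rw [h0, mul_zero] at h
  exact (Finset.prod_pos fun s _ => hc s).ne h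

lemma exp_mul_cos_eq_re_prod_cexp (ε : ℝ) (c d y : ι → ℝ) :
    Real.exp (-ε * ∑ s, c s * y s ^ 2) * Real.cos (∑ s, d s * y s ^ 2)
      = (∏ s, Complex.exp (-(ε * c s - d s * I) * (y s : ℂ) ^ 2)).re := by
  rw [← Complex.exp_sum, Complex.exp_re, Complex.re_sum, Complex.im_sum, Finset.mul_sum]
  congr 2 <;> refine Finset.sum_congr rfl fun s _ => ?_
  · simp [← Complex.ofReal_pow, mul_assoc]
  · simp [← Complex.ofReal_pow]

lemma integral_re_prod_cexp_neg_mul_sq {b : ι → ℂ} (hb : ∀ s, 0 < (b s).re) :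
    ∫ y : ι → ℝ, (∏ s, Complex.exp (-b s * (y s : ℂ) ^ 2)).re
      = (∏ s, (π / b s) ^ (1 / 2 : ℂ)).re := by
  refine (integral_re (Integrable.fintype_prod fun s => integrable_cexp_neg_mul_sq (hb s))).trans
    ?_
  rw [← volume_pi,
    integral_fintype_prod_volume_eq_prod (f := fun s (t : ℝ) => Complex.exp (-b s * (t : ℂ) ^ 2))]
  simp_rw [integral_gaussian_complex (hb _)]
  rfl

theorem integral_exp_mul_cos_eq_of_transpose_mul_mul_eq_diagonal [DecidableEq ι]
    {A P : Matrix ι ι ℝ} {c d : ι → ℝ} (hc : ∀ s, 0 < c s) (hPc : Pᵀ * P = diagonal c)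
    (hPd : Pᵀ * A * P = diagonal d) {ε : ℝ} (hε : 0 < ε) :
    ∫ x : ι → ℝ, Real.exp (-ε * ∑ s, x s ^ 2) * Real.cos (∑ s, ∑ t, A s t * x s * x t)
      = |P.det| * (∏ s, (π / (ε * c s - d s * I)) ^ (1 / 2 : ℂ)).re := by
  have hnorm (y : ι → ℝ) : ∑ s, (P *ᵥ y) s ^ 2 = ∑ s, c s * y s ^ 2 := by
    rw [← dotProduct_diagonal_mulVec, ← hPc, ← Matrix.mul_one Pᵀ,
      ← mulVec_dotProduct_mulVec_mulVec, one_mulVec, dotProduct]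
    simp only [sq]
  have hform (y : ι → ℝ) :
      ∑ s, ∑ t, A s t * (P *ᵥ y) s * (P *ᵥ y) t = ∑ s, d s * y s ^ 2 := by
    rw [sum_sum_mul_mul_eq_dotProduct_mulVec, mulVec_dotProduct_mulVec_mulVec, hPd,
      dotProduct_diagonal_mulVec]
  rw [integral_comp_mulVec (det_ne_zero_of_transpose_mul_self_eq_diagonal hc hPc)]
  simp_rw [hnorm, hform, exp_mul_cos_eq_re_prod_cexp]
  rw [integral_re_prod_cexp_neg_mul_sq fun s => by simpa using mul_pos hε (hc s)]

lemma ofReal_mul_exp_mul_I_cpow_half {r θ : ℝ} (hr : 0 < r) (hθ₁ : -π < θ) (hθ₂ : θ ≤ π) :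
    ((r : ℂ) * Complex.exp (θ * I)) ^ (1 / 2 : ℂ) = √r * Complex.exp (θ / 2 * I) := by
  have hlog : Complex.log (r * Complex.exp (θ * I)) = Real.log r + θ * I := by
    rw [Complex.log_ofReal_mul hr (Complex.exp_ne_zero _), Complex.log_exp] <;> simpa
  have hne : (r : ℂ) * Complex.exp (θ * I) ≠ 0 :=
    mul_ne_zero (by exact_mod_cast hr.ne') (Complex.exp_ne_zero _)
  rw [Complex.cpow_def_of_ne_zero hne, hlog, Real.sqrt_eq_rpow, Real.rpow_def_of_pos hr,
    Complex.ofReal_exp, ← Complex.exp_add]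
  push_cast
  ring_nf

lemma pi_div_neg_mul_I_eq {d : ℝ} (hd : d ≠ 0) :
    (π : ℂ) / -(d * I) = ↑(π / |d|) * Complex.exp (↑(Real.sign d * (π / 2)) * I) := by
  have hd' : (d : ℂ) ≠ 0 := by exact_mod_cast hd
  rcases hd.lt_or_gt with h | h
  · rw [Real.sign_of_neg h, abs_of_neg h]
    push_cast
    rw [show -1 * (π / 2 : ℂ) * I = -π / 2 * I by ring, Complex.exp_neg_pi_div_two_mul_I]
    field_simp
    rw [Complex.I_sq]
  · rw [Real.sign_of_pos h, abs_of_pos h]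
    push_cast
    rw [one_mul, Complex.exp_pi_div_two_mul_I]
    field_simp
    rw [Complex.I_sq]

lemma cpow_half_pi_div_neg_mul_I {d : ℝ} (hd : d ≠ 0) :
    ((π : ℂ) / -(d * I)) ^ (1 / 2 : ℂ)
      = √(π / |d|) * Complex.exp (↑(Real.sign d * (π / 4)) * I) := by
  rw [pi_div_neg_mul_I_eq hd, ofReal_mul_exp_mul_I_cpow_half (div_pos Real.pi_pos (abs_pos.2 hd))]
  · push_cast
    ring_nf
  all_goals
    rcases Real.sign_apply_eq_of_ne_zero d hd with h | h <;> rw [h] <;> linarith [Real.pi_pos]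

lemma re_prod_cpow_half_pi_div_neg_mul_I {d : ι → ℝ} (hd : ∀ s, d s ≠ 0) :
    (∏ s, ((π : ℂ) / -(d s * I)) ^ (1 / 2 : ℂ)).re
      = (∏ s, √(π / |d s|)) * Real.cos (π / 4 * ∑ s, Real.sign (d s)) := by
  simp_rw [cpow_half_pi_div_neg_mul_I (hd _), Finset.prod_mul_distrib, ← Complex.exp_sum,
    ← Finset.sum_mul, ← Complex.ofReal_sum, ← Complex.ofReal_prod, Complex.re_ofReal_mul,
    Complex.exp_ofReal_mul_I_re, ← Finset.sum_mul, mul_comm (π / 4)]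

lemma tendsto_re_prod_cpow_half (c d : ι → ℝ) (hd : ∀ s, d s ≠ 0) :
    Tendsto (fun ε : ℝ => (∏ s, (π / (ε * c s - d s * I)) ^ (1 / 2 : ℂ)).re) (𝓝 0)
      (𝓝 (∏ s, ((π : ℂ) / -(d s * I)) ^ (1 / 2 : ℂ)).re) := by
  have hslit (s : ι) : (π : ℂ) / -(d s * I) ∈ Complex.slitPlane := by
    rw [Complex.mem_slitPlane_iff]
    right
    simp [Complex.div_im, hd s, Real.pi_ne_zero]
  have hfactor (s : ι) : Tendsto (fun ε : ℝ => ((π : ℂ) / (ε * c s - d s * I)) ^ (1 / 2 : ℂ))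
      (𝓝 0) (𝓝 (((π : ℂ) / -(d s * I)) ^ (1 / 2 : ℂ))) := by
    have hcont : ContinuousAt (fun ε : ℝ => ((π : ℂ) / (ε * c s - d s * I)) ^ (1 / 2 : ℂ)) 0 := by
      refine (continuousAt_const.div (by fun_prop) ?_).cpow continuousAt_const ?_
      · simp [hd s]
      · simpa using hslit s
    simpa using hcont.tendsto
  exact (Complex.continuous_re.tendsto _).comp (tendsto_finsetProd _ fun s _ => hfactor s)

theorem tendsto_integral_exp_mul_cos_of_transpose_mul_mul_eq_diagonal [DecidableEq ι]
    {A P : Matrix ι ι ℝ} {c d : ι → ℝ} (hc : ∀ s, 0 < c s) (hPc : Pᵀ * P = diagonal c)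
    (hPd : Pᵀ * A * P = diagonal d) (hd : ∀ s, d s ≠ 0) :
    Tendsto
      (fun ε : ℝ =>
        ∫ x : ι → ℝ, Real.exp (-ε * ∑ s, x s ^ 2) * Real.cos (∑ s, ∑ t, A s t * x s * x t))
      (𝓝[>] 0)
      (𝓝 (|P.det| * (∏ s, √(π / |d s|)) * Real.cos (π / 4 * ∑ s, Real.sign (d s)))) := by
  have hlim := (tendsto_re_prod_cpow_half c d hd).const_mul |P.det|
  rw [re_prod_cpow_half_pi_div_neg_mul_I hd, ← mul_assoc] at hlim
  refine (hlim.mono_left nhdsWithin_le_nhds).congr' ?_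
  filter_upwards [self_mem_nhdsWithin] with ε hε
  exact (integral_exp_mul_cos_eq_of_transpose_mul_mul_eq_diagonal hc hPc hPd hε).symm

end Gaussian

section Transfer

variable {κ ι R S : Type*} [Fintype κ] [Fintype ι] [DecidableEq κ] [DecidableEq ι]

lemma transpose_mul_mul_submatrix_map_eq_diagonal [Semiring R] [Semiring S] (f : R →+* S)
    (e : κ ≃ ι) {Q : Matrix κ κ R} {A : Matrix ι ι R} {d : κ → R}
    (h : Qᵀ * A.submatrix e e * Q = diagonal d) :
    ((Q.map f).submatrix e.symm e.symm)ᵀ * A.map f * (Q.map f).submatrix e.symm e.symm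
      = diagonal (fun s => f (d (e.symm s))) := by
  have hA : A.map f = ((A.submatrix e e).map f).submatrix e.symm e.symm := by
    ext; simp
  rw [hA, transpose_submatrix, submatrix_mul_equiv, submatrix_mul_equiv, ← transpose_map,
    ← Matrix.map_mul, ← Matrix.map_mul, h, diagonal_map (map_zero f), submatrix_diagonal_equiv]
  rfl

end Transfer

namespace HessianMatrix

abbrev Pair := {s : Finset (Fin 5) // s.card = 2}

def finPair : Fin 10 → Pair :=
  ![⟨{0, 1}, rfl⟩, ⟨{0, 2}, rfl⟩, ⟨{0, 3}, rfl⟩, ⟨{0, 4}, rfl⟩, ⟨{1, 2}, rfl⟩,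
    ⟨{1, 3}, rfl⟩, ⟨{1, 4}, rfl⟩, ⟨{2, 3}, rfl⟩, ⟨{2, 4}, rfl⟩, ⟨{3, 4}, rfl⟩]

noncomputable def finEquivPair : Fin 10 ≃ Pair := Equiv.ofBijective finPair (by decide)

def ratMatrix : Matrix Pair Pair ℚ := fun s t =>
  if (s.1 ∩ t.1).card = 2 then -4 else if (s.1 ∩ t.1).card = 1 then 7 / 2 else -9

lemma eq_map_ratMatrix : HessianMatrix = ratMatrix.map (↑) := by
  ext s t
  simp only [HessianMatrix, ratMatrix, map_apply]
  split_ifs <;> norm_num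

-- Column `j` is an eigenvector for `eigenvalue j`; row `i` is the coordinate at `finPair i`.
def eigenbasis : Matrix (Fin 10) (Fin 10) ℚ :=
  !![1, 0, 2, 2, 2, 3, 0, 0, 0, 0;
     1, 1, -1, 2, 2, -1, 4, 0, 0, 0;
     1, 1, 1, -2, 2, -1, -2, 2, 0, 0;
     1, 1, 1, 1, -3, -1, -2, -2, 0, 0;
     1, -1, -1, 2, 2, -1, -2, 0, 2, 0;
     1, -1, 1, -2, 2, -1, 1, -1, -1, 1;
     1, -1, 1, 1, -3, -1, 1, 1, -1, -1;
     1, 0, -2, -2, 2, 1, -1, -1, -1, -1;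
     1, 0, -2, 1, -3, 1, -1, 1, -1, 1;
     1, 0, 0, -3, -3, 1, 2, 0, 2, 0]

def eigenbasisNormSq : Fin 10 → ℚ := ![10, 6, 18, 36, 60, 18, 36, 12, 12, 4]

def eigenvalue : Fin 10 → ℚ := ![-10, 35/2, 35/2, 35/2, 35/2, -20, -20, -20, -20, -20]

theorem eigenbasis_transpose_mul_self :
    eigenbasisᵀ * eigenbasis = diagonal eigenbasisNormSq := by
  decide +kernel

theorem eigenbasis_transpose_mul_ratMatrix_mul :
    eigenbasisᵀ * ratMatrix.submatrix finEquivPair finEquivPair * eigenbasis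
      = diagonal (eigenvalue * eigenbasisNormSq) := by
  decide +kernel

theorem exists_congr_diagonal :
    ∃ (P : Matrix Pair Pair ℝ) (c d : Pair → ℝ), (∀ s, 0 < c s) ∧ Pᵀ * P = diagonal c ∧
      Pᵀ * HessianMatrix * P = diagonal d ∧ (∀ s, d s ≠ 0) ∧ ∑ s, Real.sign (d s) = -2 := by
  set e := finEquivPair
  have hNormSq : ∀ j, 0 < eigenbasisNormSq j := by decide +kernel
  have hDiag : ∀ j, (eigenvalue * eigenbasisNormSq) j ≠ 0 := by decide +kernel
  refine ⟨(eigenbasis.map (↑)).submatrix e.symm e.symm, fun s => eigenbasisNormSq (e.symm s),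
    fun s => (eigenvalue * eigenbasisNormSq) (e.symm s), fun s => ?_, ?_, ?_, fun s => ?_, ?_⟩
  · exact Rat.cast_pos.mpr (hNormSq _)
  · have h := transpose_mul_mul_submatrix_map_eq_diagonal (Rat.castHom ℝ) e
      (Q := eigenbasis) (A := 1)
      (by rw [submatrix_one_equiv, Matrix.mul_one]; exact eigenbasis_transpose_mul_self)
    rwa [Matrix.map_one _ (map_zero _) (map_one _), Matrix.mul_one] at h
  · rw [eq_map_ratMatrix]
    exact transpose_mul_mul_submatrix_map_eq_diagonal (Rat.castHom ℝ) e
      eigenbasis_transpose_mul_ratMatrix_mul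
  · exact Rat.cast_ne_zero.mpr (hDiag _)
  · rw [Equiv.sum_comp e.symm fun j => Real.sign ((eigenvalue * eigenbasisNormSq) j : ℝ)]
    norm_num [Fin.sum_univ_succ, eigenvalue, eigenbasisNormSq, Real.sign_of_pos, Real.sign_of_neg]

end HessianMatrix

/-- As `ε → 0⁺`, the regularized integral `∫ exp(-ε‖x‖²)·cos(xᵀTx) dx` over ℝ^10
converges to `0`. -/
theorem cos_fresnel_integral_hessianMatrix :
    Tendsto
      (fun ε : ℝ =>
        ∫ x : {s : Finset (Fin 5) // s.card = 2} → ℝ,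
          Real.exp (-ε * ∑ s, (x s) ^ 2) *
            Real.cos (∑ s, ∑ t, HessianMatrix s t * x s * x t))
      (nhdsWithin 0 (Set.Ioi 0)) (nhds 0) := by
  obtain ⟨P, c, d, hc, hPc, hPd, hd, hsignature⟩ := HessianMatrix.exists_congr_diagonal
  have h := tendsto_integral_exp_mul_cos_of_transpose_mul_mul_eq_diagonal hc hPc hPd hd
  rwa [hsignature, show π / 4 * -2 = -(π / 2) by ring, Real.cos_neg, Real.cos_pi_div_two,
    mul_zero] at h
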